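/- arXiv:math/0309101 — 11 statements merged into one kernel-verified Lean document; each statement's English description precedes it below -/
import Mathlib

section
/- If a metric space M is finitely injective (i.e., for every finite metric space L, every subset K ⊆ L, and every isometric embedding f : K → M, there is an isometric embedding of L into M extending f), then every countable metric space admits an isometric embedding into M. -/
/-- A metric space `M` is finitely injective if every distance-preserving map
from a subspace of a finite metric space into `M` extends to a
distance-preserving map of the whole finite space. -/
def FinitelyInjective (M : Type*) [MetricSpace M] : Prop :=
  ∀ (L : Type) (_ : MetricSpace L) (_ : Finite L) (K : Set L) (f : K → M),
    Isometry f → ∃ g : L → M, Isometry g ∧ ∀ x : K, g x = f x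

/-!
Enumerate the countable space `X` as an increasing union of finite sets `S n`. Finite
injectivity extends an isometric embedding of `S n` to one of `S (n + 1)`, so by recursion
we get a compatible chain of isometric embeddings, whose union is an isometric embedding
of `X`.
-/

open Set

section

variable {X M : Type*} [MetricSpace X] [MetricSpace M]

theorem exists_isometry_of_domRestrict_chain {S : ℕ → Set X} (hS : Monotone S)
    (hcover : ∀ x, ∃ n, x ∈ S n) (g : ℕ → X → M) (hg : ∀ n, Isometry ((S n).domRestrict (g n)))
    (hgS : ∀ n, EqOn (g (n + 1)) (g n) (S n)) :
    ∃ f : X → M, Isometry f := by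
  have agree : ∀ {m n}, m ≤ n → EqOn (g n) (g m) (S m) := by
    intro m n hmn
    induction n, hmn using Nat.le_induction with
    | base => exact eqOn_refl _ _
    | succ n hmn ih => exact (hgS n).mono (hS hmn) |>.trans ih
  choose N hN using hcover
  refine ⟨fun x => g (N x) x, Isometry.of_dist_eq fun x y => ?_⟩
  have hx : x ∈ S (max (N x) (N y)) := hS (le_max_left _ _) (hN x)
  have hy : y ∈ S (max (N x) (N y)) := hS (le_max_right _ _) (hN y)
  calc dist (g (N x) x) (g (N y) y)
      = dist (g (max (N x) (N y)) x) (g (max (N x) (N y)) y) := by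
        rw [agree (le_max_left _ _) (hN x), agree (le_max_right _ _) (hN y)]
    _ = dist x y := (hg _).dist_eq ⟨x, hx⟩ ⟨y, hy⟩

end

section

variable {M : Type*} [MetricSpace M] {X : Type} [MetricSpace X]

theorem FinitelyInjective.nonempty (hM : FinitelyInjective M) : Nonempty M := by
  obtain ⟨g, -, -⟩ := hM Unit inferInstance inferInstance ∅ (fun x => x.2.elim)
    (fun x => x.2.elim)
  exact ⟨g ()⟩

theorem FinitelyInjective.exists_extend (hM : FinitelyInjective M) {s t : Set X}
    (hst : s ⊆ t) (ht : t.Finite) {g : X → M} (hg : Isometry (s.domRestrict g)) :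
    ∃ g' : X → M, Isometry (t.domRestrict g') ∧ EqOn g' g s := by
  classical
  have : Finite t := ht.to_subtype
  obtain ⟨h, hh, hext⟩ := hM t inferInstance inferInstance {y : t | (y : X) ∈ s}
    (fun y => g y) (Isometry.of_dist_eq fun a b => hg.dist_eq ⟨a, a.2⟩ ⟨b, b.2⟩)
  refine ⟨fun x => if hx : x ∈ t then h ⟨x, hx⟩ else g x, ?_, fun x hx => ?_⟩
  · have hrestrict : t.domRestrict (fun x => if hx : x ∈ t then h ⟨x, hx⟩ else g x) = h :=
      funext fun x => dif_pos x.2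
    rwa [hrestrict]
  · simpa [hst hx] using hext ⟨⟨x, hst hx⟩, hx⟩

theorem FinitelyInjective.exists_domRestrict_isometry_chain (hM : FinitelyInjective M) {S : ℕ → Set X} (hS : Monotone S) (hfin : ∀ n, (S n).Finite) :
    ∃ g : ℕ → X → M,
      (∀ n, Isometry ((S n).domRestrict (g n))) ∧ ∀ n, EqOn (g (n + 1)) (g n) (S n) := by
  have step : ∀ n (g : {g : X → M // Isometry ((S n).domRestrict g)}),
      ∃ g' : {g' : X → M // Isometry ((S (n + 1)).domRestrict g')}, EqOn g'.1 g.1 (S n) :=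
    fun n g => by
      obtain ⟨g', hg', hext⟩ := hM.exists_extend (hS n.le_succ) (hfin _) g.2
      exact ⟨⟨g', hg'⟩, hext⟩
  choose next hnext using step
  have := hM.nonempty
  obtain ⟨g₀, hg₀, -⟩ := hM.exists_extend (empty_subset (S 0)) (hfin 0)
    (g := fun _ => Classical.arbitrary M) (Isometry.of_dist_eq fun x => x.2.elim)
  let chain : ∀ n, {g : X → M // Isometry ((S n).domRestrict g)} :=
    fun n => Nat.rec ⟨g₀, hg₀⟩ next n
  exact ⟨fun n => (chain n).1, fun n => (chain n).2, fun n => hnext n (chain n)⟩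

end

theorem stmt0 (M : Type*) [MetricSpace M] (hM : FinitelyInjective M)
    (X : Type) [MetricSpace X] [Countable X] :
    ∃ f : X → M, Isometry f := by
  obtain ⟨ι, hι⟩ := Countable.exists_injective_nat X
  have hS : Monotone fun n => ι ⁻¹' Iio n := fun m n hmn => preimage_mono (Iio_subset_Iio hmn)
  obtain ⟨g, hg, hgS⟩ :=
    hM.exists_domRestrict_isometry_chain hS fun n => (finite_Iio n).preimage hι.injOn
  exact exists_isometry_of_domRestrict_chain hS (fun x => ⟨ι x + 1, Nat.lt_succ_self _⟩) g hg hgS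
end

section
/- Any two complete, separable, finitely injective metric spaces are isometric (there is a distance-preserving bijection between them). -/
lemma FI.nonempty {M : Type} [MetricSpace M] (h : FinitelyInjective M) : Nonempty M := by
  obtain ⟨g, -, -⟩ := h PUnit inferInstance inferInstance ∅
    (fun z => absurd z.2 (Set.notMem_empty _))
    (fun z => absurd z.2 (Set.notMem_empty _))
  exact ⟨g PUnit.unit⟩

lemma FI.extend_pt {M N : Type} [MetricSpace M] [MetricSpace N] (hN : FinitelyInjective N)
    {n : ℕ} (u : Fin n → M) (v : Fin n → N)
    (hd : ∀ i j, dist (u i) (u j) = dist (v i) (v j)) (a : M) :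
    ∃ b : N, ∀ i, dist b (v i) = dist a (u i) := by
  have key : ∀ i j, u i = u j → v i = v j := by
    intro i j hij
    have : dist (v i) (v j) = 0 := by rw [← hd, hij, dist_self]
    exact dist_eq_zero.mp this
  set S : Set M := insert a (Set.range u) with hS
  have hfin : S.Finite := (Set.finite_range u).insert a
  haveI : Finite ↥S := hfin.to_subtype
  set K : Set ↥S := {z | (z : M) ∈ Set.range u} with hK
  set f : K → N := fun z => v z.2.choose with hfdef
  have hf : ∀ (z : K) i, u i = (z : M) → f z = v i := by
    intro z i hi
    exact key _ _ (z.2.choose_spec.trans hi.symm)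
  have hu : ∀ i, u i = ((⟨⟨u i, Set.mem_insert_of_mem _ ⟨i, rfl⟩⟩, ⟨i, rfl⟩⟩ : K) : M) :=
    fun i => rfl
  have hfiso : Isometry f := by
    apply Isometry.of_dist_eq
    intro z w
    obtain ⟨i, hi⟩ := z.2
    obtain ⟨j, hj⟩ := w.2
    rw [hf z i hi, hf w j hj, ← hd, Subtype.dist_eq, Subtype.dist_eq, hi, hj]
  obtain ⟨g, hgiso, hgf⟩ := hN ↥S inferInstance inferInstance K f hfiso
  refine ⟨g ⟨a, Set.mem_insert _ _⟩, fun i => ?_⟩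
  set zi : ↥K := ⟨⟨u i, Set.mem_insert_of_mem _ ⟨i, rfl⟩⟩, ⟨i, rfl⟩⟩ with hzi
  have : g ↑zi = v i := (hgf zi).trans (hf zi i rfl)
  rw [← this, hgiso.dist_eq, Subtype.dist_eq]

section chain
variable {M₁ M₂ : Type} [MetricSpace M₁] [MetricSpace M₂]

def Cond (x : ℕ → M₁) (y : ℕ → M₂) (n : ℕ) (p : (Fin n → M₁) × (Fin n → M₂)) : Prop :=
  (∀ i j, dist (p.1 i) (p.1 j) = dist (p.2 i) (p.2 j)) ∧
  (∀ k, ∀ h : 2*k < n, p.1 ⟨2*k, h⟩ = x k) ∧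
  (∀ k, ∀ h : 2*k+1 < n, p.2 ⟨2*k+1, h⟩ = y k)

lemma step_ex (h₁ : FinitelyInjective M₁) (h₂ : FinitelyInjective M₂)
    (x : ℕ → M₁) (y : ℕ → M₂) (n : ℕ) (p : (Fin n → M₁) × (Fin n → M₂))
    (hp : Cond x y n p) :
    ∃ q : (Fin (n+1) → M₁) × (Fin (n+1) → M₂),
      Cond x y (n+1) q ∧ ∀ i : Fin n, q.1 i.castSucc = p.1 i ∧ q.2 i.castSucc = p.2 i := by
  obtain ⟨hd, hx, hy⟩ := hp
  have hab : ∃ a b, (∀ i, dist a (p.1 i) = dist b (p.2 i)) ∧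
      (n % 2 = 0 → a = x (n/2)) ∧ (n % 2 = 1 → b = y (n/2)) := by
    rcases Nat.even_or_odd n with he | ho
    · obtain ⟨b, hb⟩ := FI.extend_pt h₂ p.1 p.2 hd (x (n/2))
      rw [Nat.even_iff] at he
      exact ⟨x (n/2), b, fun i => (hb i).symm, fun _ => rfl, fun h => by omega⟩
    · obtain ⟨a, ha⟩ := FI.extend_pt h₁ p.2 p.1 (fun i j => (hd i j).symm) (y (n/2))
      rw [Nat.odd_iff] at ho
      exact ⟨a, y (n/2), fun i => ha i, fun h => by omega, fun _ => rfl⟩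
  obtain ⟨a, b, hab, hax, hby⟩ := hab
  refine ⟨(Fin.snoc p.1 a, Fin.snoc p.2 b), ⟨?_, ?_, ?_⟩,
    fun i => ⟨by simp, by simp⟩⟩
  · intro i j
    rcases Fin.eq_castSucc_or_eq_last i with ⟨i', rfl⟩ | rfl <;>
      rcases Fin.eq_castSucc_or_eq_last j with ⟨j', rfl⟩ | rfl <;>
      simp only [Fin.snoc_castSucc, Fin.snoc_last]
    · exact hd i' j'
    · rw [dist_comm, dist_comm (p.2 i') b]; exact hab i'
    · exact hab j'
    · simp
  · intro k h
    dsimp only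
    rcases Nat.lt_or_ge (2*k) n with h' | h'
    · have he : (⟨2*k, h⟩ : Fin (n+1)) = Fin.castSucc ⟨2*k, h'⟩ := rfl
      rw [he, Fin.snoc_castSucc]; exact hx k h'
    · have hkn : 2*k = n := by omega
      have he : (⟨2*k, h⟩ : Fin (n+1)) = Fin.last n := by ext; simp [hkn]
      rw [he, Fin.snoc_last]
      rw [hax (by omega)]
      congr 1; omega
  · intro k h
    dsimp only
    rcases Nat.lt_or_ge (2*k+1) n with h' | h'
    · have he : (⟨2*k+1, h⟩ : Fin (n+1)) = Fin.castSucc ⟨2*k+1, h'⟩ := rfl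
      rw [he, Fin.snoc_castSucc]; exact hy k h'
    · have hkn : 2*k+1 = n := by omega
      have he : (⟨2*k+1, h⟩ : Fin (n+1)) = Fin.last n := by ext; simp [hkn]
      rw [he, Fin.snoc_last]
      rw [hby (by omega)]
      congr 1; omega

lemma chain_ex (h₁ : FinitelyInjective M₁) (h₂ : FinitelyInjective M₂)
    (x : ℕ → M₁) (y : ℕ → M₂) :
    ∃ (u : ℕ → M₁) (v : ℕ → M₂),
      (∀ m n, dist (u m) (u n) = dist (v m) (v n)) ∧
      (∀ k, u (2*k) = x k) ∧ (∀ k, v (2*k+1) = y k) := by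
  choose step hcond hcomp using step_ex h₁ h₂ x y
  let F : (n : ℕ) → {p : (Fin n → M₁) × (Fin n → M₂) // Cond x y n p} :=
    fun n => Nat.rec ⟨(Fin.elim0, Fin.elim0), ⟨fun i => i.elim0, fun k h => absurd h (Nat.not_lt_zero _),
      fun k h => absurd h (Nat.not_lt_zero _)⟩⟩ (fun n prev => ⟨step n prev.1 prev.2, hcond n prev.1 prev.2⟩) n
  have hFsucc : ∀ n, (F (n+1)).1 = step n (F n).1 (F n).2 := fun n => rfl
  set u : ℕ → M₁ := fun n => (F (n+1)).1.1 (Fin.last n) with hu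
  set v : ℕ → M₂ := fun n => (F (n+1)).1.2 (Fin.last n) with hv
  have compat : ∀ n, ∀ m : ℕ, ∀ h : m < n, (F n).1.1 ⟨m, h⟩ = u m ∧ (F n).1.2 ⟨m, h⟩ = v m := by
    intro n
    induction n with
    | zero => intro m h; omega
    | succ n ih =>
      intro m h
      rcases Nat.lt_or_ge m n with h' | h'
      · have he : (⟨m, h⟩ : Fin (n+1)) = Fin.castSucc ⟨m, h'⟩ := rfl
        rw [he, hFsucc n]
        obtain ⟨c1, c2⟩ := hcomp n (F n).1 (F n).2 ⟨m, h'⟩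
        rw [c1, c2]
        exact ih m h'
      · have hmn : m = n := by omega
        subst hmn
        have he : (⟨m, h⟩ : Fin (m+1)) = Fin.last m := rfl
        rw [he]
        exact ⟨rfl, rfl⟩
  refine ⟨u, v, ?_, ?_, ?_⟩
  · intro m n
    set N := max m n + 1 with hN
    have hm : m < N := by omega
    have hn : n < N := by omega
    obtain ⟨hc, -, -⟩ := (F N).2
    have := hc ⟨m, hm⟩ ⟨n, hn⟩
    rwa [(compat N m hm).1, (compat N n hn).1, (compat N m hm).2, (compat N n hn).2] at this
  · intro k
    have h : 2*k < 2*k+1 := by omega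
    obtain ⟨-, hx', -⟩ := (F (2*k+1)).2
    have := hx' k h
    rwa [(compat (2*k+1) (2*k) h).1] at this
  · intro k
    have h : 2*k+1 < 2*k+2 := by omega
    obtain ⟨-, -, hy'⟩ := (F (2*k+2)).2
    have := hy' k h
    rwa [(compat (2*k+2) (2*k+1) h).2] at this

end chain

theorem stmt2 (M₁ M₂ : Type) [MetricSpace M₁] [MetricSpace M₂]
    [CompleteSpace M₁] [CompleteSpace M₂]
    [TopologicalSpace.SeparableSpace M₁] [TopologicalSpace.SeparableSpace M₂]
    (h₁ : FinitelyInjective M₁) (h₂ : FinitelyInjective M₂) :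
    Nonempty (M₁ ≃ᵢ M₂) := by
  haveI := FI.nonempty h₁
  haveI := FI.nonempty h₂
  obtain ⟨x, hx⟩ := TopologicalSpace.exists_dense_seq M₁
  obtain ⟨y, hy⟩ := TopologicalSpace.exists_dense_seq M₂
  obtain ⟨u, v, hd, hux, hvy⟩ := chain_ex h₁ h₂ x y
  have key : ∀ m n, u m = u n → v m = v n := by
    intro m n hmn
    have : dist (v m) (v n) = 0 := by rw [← hd, hmn, dist_self]
    exact dist_eq_zero.mp this
  set s : Set M₁ := Set.range u with hs
  have hsd : Dense s := hx.mono (Set.range_subset_iff.mpr (fun k => ⟨2*k, hux k⟩))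
  set h : ↥s → M₂ := fun z => v z.2.choose with hh
  have hhn : ∀ (z : ↥s) n, u n = (z : M₁) → h z = v n :=
    fun z n hn => key _ _ (z.2.choose_spec.trans hn.symm)
  have hiso : Isometry h := by
    apply Isometry.of_dist_eq
    intro z w
    obtain ⟨i, hi⟩ := z.2
    obtain ⟨j, hj⟩ := w.2
    rw [hhn z i hi, hhn w j hj, ← hd, Subtype.dist_eq, hi, hj]
  have hvd : Dense (Set.range v) := hy.mono (Set.range_subset_iff.mpr (fun k => ⟨2*k+1, hvy k⟩))
  have hhd : DenseRange h := by
    refine Dense.mono ?_ hvd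
    rintro z ⟨n, rfl⟩
    exact ⟨⟨u n, ⟨n, rfl⟩⟩, hhn _ n rfl⟩
  let pkg₁ : AbstractCompletion ↥s :=
    ⟨M₁, Subtype.val, inferInstance, inferInstance, inferInstance,
      isUniformEmbedding_subtype_val.isUniformInducing, hsd.denseRange_val⟩
  let pkg₂ : AbstractCompletion ↥s :=
    ⟨M₂, h, inferInstance, inferInstance, inferInstance,
      hiso.isUniformInducing, hhd⟩
  let e := pkg₁.compareEquiv pkg₂
  have he : ∀ z : ↥s, e ↑z = h z := fun z => pkg₁.compare_coe pkg₂ z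
  have hiso' : Isometry ⇑e := by
    apply Isometry.of_dist_eq
    intro a b
    have hfg : (fun p : M₁ × M₁ => dist (e p.1) (e p.2)) = fun p => dist p.1 p.2 := by
      apply Continuous.ext_on (hsd.prod hsd)
      · exact continuous_dist.comp
          ((((pkg₁.uniformContinuous_compareEquiv pkg₂).continuous).comp continuous_fst).prodMk
           (((pkg₁.uniformContinuous_compareEquiv pkg₂).continuous).comp continuous_snd))
      · exact continuous_dist
      · rintro ⟨p1, p2⟩ ⟨hp1, hp2⟩
        show dist (e p1) (e p2) = dist p1 p2
        rw [show p1 = ((⟨p1, hp1⟩ : ↥s) : M₁) from rfl,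
            show p2 = ((⟨p2, hp2⟩ : ↥s) : M₁) from rfl,
            he ⟨p1, hp1⟩, he ⟨p2, hp2⟩, hiso.dist_eq, Subtype.dist_eq]
    exact congrFun hfg (a, b)
  exact ⟨⟨e.toEquiv, hiso'⟩⟩
end

section
/- If M is a complete, separable, finitely injective metric space, then every isometry between two finite subsets of M extends to an isometry of M onto itself. -/
/-- A set of pairs is an *isometric relation* if corresponding coordinates
are at equal distances. -/
def IsoRel {M : Type*} [MetricSpace M] (p : Set (M × M)) : Prop :=
  ∀ a ∈ p, ∀ b ∈ p, dist a.1 b.1 = dist a.2 b.2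

lemma isoRel_swap {M : Type*} [MetricSpace M] {p : Set (M × M)} (hp : IsoRel p) :
    IsoRel (Prod.swap '' p) := by
  rintro a ⟨a', ha', rfl⟩ b ⟨b', hb', rfl⟩
  simpa [dist_comm] using (hp a' ha' b' hb').symm

lemma extend_forward {M : Type*} [MetricSpace M] (hM : FinitelyInjective M)
    {p : Set (M × M)} (hp : p.Finite) (hr : IsoRel p) (x : M) :
    ∃ y, IsoRel (insert (x, y) p) := by
  classical
  set S : Set M := insert x (Prod.fst '' p) with hSdef
  have hSfin : S.Finite := (hp.image _).insert x
  have : Finite S := hSfin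
  obtain ⟨n, ⟨eqv⟩⟩ := Finite.exists_equiv_fin S
  set ι : Fin n → M := fun i => ((eqv.symm i : S) : M) with hι
  have hιinj : Function.Injective ι := fun i j h =>
    eqv.symm.injective (Subtype.ext h)
  letI : MetricSpace (Fin n) := MetricSpace.induced ι hιinj inferInstance
  have hdist : ∀ i j : Fin n, dist i j = dist (ι i) (ι j) := fun _ _ => rfl
  have hιidx : ∀ (z : M) (hz : z ∈ S), ι (eqv ⟨z, hz⟩) = z := by
    intro z hz; simp [hι]
  set K : Set (Fin n) := {i | ι i ∈ Prod.fst '' p} with hK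
  have hfun : ∀ i : K, ∃ q, q ∈ p ∧ q.1 = ι (i : Fin n) := by
    rintro ⟨i, ⟨q, hq, h⟩⟩; exact ⟨q, hq, h⟩
  choose q hq hq1 using hfun
  set f : K → M := fun i => (q i).2 with hf
  have hfiso : Isometry f := by
    apply Isometry.of_dist_eq
    intro i j
    have h := hr (q i) (hq i) (q j) (hq j)
    rw [hq1 i, hq1 j] at h
    rw [hf]
    simp only
    rw [← h, Subtype.dist_eq, hdist]
  obtain ⟨g, hg, hge⟩ := hM (Fin n) _ inferInstance K f hfiso
  have hxS : x ∈ S := Set.mem_insert _ _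
  -- the image of any point of the graph is determined
  have hgb : ∀ b ∈ p, ∀ (h1 : b.1 ∈ S), g (eqv ⟨b.1, h1⟩) = b.2 := by
    intro b hb h1
    set i : Fin n := eqv ⟨b.1, h1⟩ with hi
    have hιi : ι i = b.1 := hιidx _ _
    have hiK : i ∈ K := ⟨b, hb, hιi.symm⟩
    have := hge ⟨i, hiK⟩
    rw [this]
    have h1' : (q ⟨i, hiK⟩).1 = b.1 := by rw [hq1 ⟨i, hiK⟩, hιi]
    have := hr (q ⟨i, hiK⟩) (hq _) b hb
    rw [h1'] at this
    simp only [dist_self] at this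
    show (q ⟨i, hiK⟩).2 = b.2
    exact eq_of_dist_eq_zero this.symm
  refine ⟨g (eqv ⟨x, hxS⟩), ?_⟩
  have key : ∀ b ∈ p, dist x b.1 = dist (g (eqv ⟨x, hxS⟩)) b.2 := by
    intro b hb
    have h1 : b.1 ∈ S := Set.mem_insert_of_mem _ ⟨b, hb, rfl⟩
    rw [← hgb b hb h1, hg.dist_eq, hdist, hιidx, hιidx]
  rintro a (rfl | ha) b (rfl | hb)
  · simp
  · exact key b hb
  · rw [dist_comm, dist_comm a.2]
    exact key a ha
  · exact hr a ha b hb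

lemma step_exists {M : Type*} [MetricSpace M] (hM : FinitelyInjective M)
    {p : Set (M × M)} (hp : p.Finite) (hr : IsoRel p) (x : M) :
    ∃ q : Set (M × M), p ⊆ q ∧ q.Finite ∧ IsoRel q ∧
      x ∈ Prod.fst '' q ∧ x ∈ Prod.snd '' q := by
  obtain ⟨y, hy⟩ := extend_forward hM hp hr x
  set p1 : Set (M × M) := insert (x, y) p with hp1
  have hp1fin : p1.Finite := hp.insert _
  obtain ⟨y', hy'⟩ := extend_forward hM (hp1fin.image _) (isoRel_swap hy) x
  refine ⟨insert (y', x) p1, ?_, (hp1fin.insert _), ?_, ?_, ?_⟩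
  · exact (Set.subset_insert _ _).trans (Set.subset_insert _ _)
  · have : insert (y', x) p1 = Prod.swap '' insert (x, y') (Prod.swap '' p1) := by
      rw [Set.image_insert_eq, Set.image_image]
      simp [Prod.swap_swap]
    rw [this]
    exact isoRel_swap hy'
  · exact ⟨(x, y), Set.mem_insert_of_mem _ (Set.mem_insert _ _), rfl⟩
  · exact ⟨(y', x), Set.mem_insert _ _, rfl⟩

theorem stmt3 (M : Type*) [MetricSpace M] [CompleteSpace M]
    [TopologicalSpace.SeparableSpace M] (hM : FinitelyInjective M)
    (A B : Set M) (hA : A.Finite) (hB : B.Finite)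
    (e : A → B) (he : Function.Bijective e)
    (hiso : ∀ x y : A, dist (e x : M) (e y : M) = dist (x : M) (y : M)) :
    ∃ g : M ≃ᵢ M, ∀ x : A, g x = (e x : M) := by
  classical
  rcases isEmpty_or_nonempty M with hME | hME
  · exact ⟨IsometryEquiv.refl M, fun x => isEmptyElim (x : M)⟩
  -- dense sequence
  set s : ℕ → M := TopologicalSpace.denseSeq M with hs
  have hsd : DenseRange s := TopologicalSpace.denseRange_denseSeq M
  -- initial graph
  have : Finite A := hA.to_subtype
  set p0 : Set (M × M) := Set.range (fun a : A => ((a : M), (e a : M))) with hp0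
  have hp0fin : p0.Finite := Set.finite_range _
  have hp0iso : IsoRel p0 := by
    rintro a ⟨u, rfl⟩ b ⟨v, rfl⟩
    exact (hiso u v).symm
  -- the back-and-forth sequence of finite isometric relations
  have step : ∀ (t : {p : Set (M × M) // p.Finite ∧ IsoRel p}) (x : M),
      ∃ u : {p : Set (M × M) // p.Finite ∧ IsoRel p},
        t.1 ⊆ u.1 ∧ x ∈ Prod.fst '' u.1 ∧ x ∈ Prod.snd '' u.1 := by
    intro t x
    obtain ⟨q, h1, h2, h3, h4, h5⟩ := step_exists hM t.2.1 t.2.2 x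
    exact ⟨⟨q, h2, h3⟩, h1, h4, h5⟩
  choose st hst1 hst2 hst3 using step
  set P : ℕ → {p : Set (M × M) // p.Finite ∧ IsoRel p} :=
    fun n => Nat.rec ⟨p0, hp0fin, hp0iso⟩ (fun n t => st t (s n)) n with hP
  have hPsucc : ∀ n, P (n + 1) = st (P n) (s n) := fun n => rfl
  have hmono : Monotone fun n => (P n).1 :=
    monotone_nat_of_le_succ fun n => hst1 (P n) (s n)
  set U : Set (M × M) := ⋃ n, (P n).1 with hU
  have hUiso : IsoRel U := by
    intro a ha b hb
    obtain ⟨_, ⟨m, rfl⟩, ha⟩ := ha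
    obtain ⟨_, ⟨k, rfl⟩, hb⟩ := hb
    exact (P (max m k)).2.2 a (hmono (le_max_left m k) ha) b
      (hmono (le_max_right m k) hb)
  set D : Set M := Prod.fst '' U with hD
  have hfun : ∀ z : D, ∃ q, q ∈ U ∧ q.1 = (z : M) := by
    rintro ⟨z, ⟨q, hq, h⟩⟩; exact ⟨q, hq, h⟩
  choose q hqU hq1 using hfun
  set f : D → M := fun z => (q z).2 with hf
  -- functionality of the relation
  have huniq : ∀ b ∈ U, ∀ (z : D), (z : M) = b.1 → f z = b.2 := by
    intro b hb z hz
    have := hUiso (q z) (hqU z) b hb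
    rw [hq1 z, hz] at this
    simp only [dist_self] at this
    show (q z).2 = b.2
    exact eq_of_dist_eq_zero this.symm
  have hfiso : Isometry f := by
    apply Isometry.of_dist_eq
    intro z w
    have h := hUiso (q z) (hqU z) (q w) (hqU w)
    rw [hq1 z, hq1 w] at h
    rw [hf]
    simp only
    rw [← h, Subtype.dist_eq]
  -- the domain is dense
  have hsD : ∀ n, s n ∈ D := by
    intro n
    obtain ⟨b, hb, h⟩ := hst2 (P n) (s n)
    exact ⟨b, Set.mem_iUnion.2 ⟨n + 1, by rw [hPsucc]; exact hb⟩, h⟩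
  have hDdense : Dense D := hsd.mono (Set.range_subset_iff.2 hsD)
  -- the range is dense
  have hsR : ∀ n, s n ∈ Set.range f := by
    intro n
    obtain ⟨b, hb, h⟩ := hst3 (P n) (s n)
    have hbU : b ∈ U := Set.mem_iUnion.2 ⟨n + 1, by rw [hPsucc]; exact hb⟩
    refine ⟨⟨b.1, ⟨b, hbU, rfl⟩⟩, ?_⟩
    rw [huniq b hbU _ rfl, h]
  have hfd : DenseRange f := hsd.mono (Set.range_subset_iff.2 hsR)
  -- extend by completeness
  have hιiso : Isometry (Subtype.val : D → M) := isometry_subtype_coe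
  have hui : IsUniformInducing (Subtype.val : D → M) := hιiso.isUniformInducing
  have hdr : DenseRange (Subtype.val : D → M) := hDdense.denseRange_val
  set g : M → M := (hui.isDenseInducing hdr).extend f with hg
  have hgz : ∀ z : D, g (z : M) = f z := fun z =>
    uniformly_extend_of_ind hui hdr hfiso.uniformContinuous z
  have hgc : Continuous g :=
    (uniformContinuous_uniformly_extend hui hdr hfiso.uniformContinuous).continuous
  have hgiso : Isometry g := by
    apply Isometry.of_dist_eq
    have := hdr.induction_on₂ (p := fun a b => dist (g a) (g b) = dist a b)
      (isClosed_eq (by fun_prop) (by fun_prop))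
      (fun z w => by show dist (g z) (g w) = dist (z : M) (w : M); rw [hgz z, hgz w, hfiso.dist_eq, Subtype.dist_eq])
    exact this
  -- surjectivity
  have hrangesub : Set.range f ⊆ Set.range g := by
    rintro _ ⟨z, rfl⟩; exact ⟨(z : M), hgz z⟩
  have hclosed : IsClosed (Set.range g) := by
    have h1 : IsComplete (g '' Set.univ) :=
      (isComplete_image_iff hgiso.isUniformInducing).2
        (completeSpace_iff_isComplete_univ.mp ‹CompleteSpace M›)
    rw [Set.image_univ] at h1
    exact h1.isClosed
  have hsurj : Function.Surjective g := by
    rw [← Set.range_eq_univ]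
    have : Dense (Set.range g) := (hfd.mono hrangesub)
    rw [← hclosed.closure_eq]
    exact this.closure_eq
  refine ⟨⟨Equiv.ofBijective g ⟨hgiso.injective, hsurj⟩, hgiso⟩, ?_⟩
  intro x
  have hxU : ((x : M), (e x : M)) ∈ U :=
    Set.mem_iUnion.2 ⟨0, ⟨x, rfl⟩⟩
  have hxD : (x : M) ∈ D := ⟨_, hxU, rfl⟩
  show g (x : M) = (e x : M)
  rw [hgz ⟨(x : M), hxD⟩]
  exact huniq _ hxU ⟨(x : M), hxD⟩ rfl
end

section
/- If a separable metric space M contains an isometric copy of every finite metric space and every isometry between two finite subsets of M extends to a self-isometry of M, then M is finitely injective. -/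
theorem stmt4 (M : Type*) [MetricSpace M] [TopologicalSpace.SeparableSpace M]
    (huniv : ∀ (L : Type) (_ : MetricSpace L) (_ : Finite L), ∃ f : L → M, Isometry f)
    (hext : ∀ (A B : Set M), A.Finite → B.Finite →
      ∀ e : A → B, Function.Bijective e →
      (∀ x y : A, dist (e x : M) (e y : M) = dist (x : M) (y : M)) →
      ∃ g : M ≃ᵢ M, ∀ x : A, g x = (e x : M)) :
    FinitelyInjective M := by
  intro L _ _ K f hf
  obtain ⟨φ, hφ⟩ := huniv L ‹_› ‹_›
  -- the restriction of φ to K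
  set φk : K → M := fun k => φ k with hφk
  have hφk_iso : Isometry φk := fun x y => hφ x y
  have hφk_inj : Function.Injective φk := hφk_iso.injective
  have hf_inj : Function.Injective f := hf.injective
  set A : Set M := Set.range φk with hA
  set B : Set M := Set.range f with hB
  haveI : Finite K := Subtype.finite
  have hAfin : A.Finite := Set.finite_range φk
  have hBfin : B.Finite := Set.finite_range f
  set eqA := Equiv.ofInjective φk hφk_inj
  set eqB := Equiv.ofInjective f hf_inj
  set e : A → B := fun a => eqB (eqA.symm a) with he
  have hbij : Function.Bijective e := (eqA.symm.trans eqB).bijective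
  have hdist : ∀ x y : A, dist (e x : M) (e y : M) = dist (x : M) (y : M) := by
    intro x y
    have hx : (x : M) = φk (eqA.symm x) :=
      (Equiv.apply_ofInjective_symm hφk_inj x).symm
    have hy : (y : M) = φk (eqA.symm y) :=
      (Equiv.apply_ofInjective_symm hφk_inj y).symm
    have h1 : dist (e x : M) (e y : M) = dist (eqA.symm x) (eqA.symm y) := by
      simpa [e, eqB] using hf.dist_eq (eqA.symm x) (eqA.symm y)
    rw [h1, hx, hy, hφk_iso.dist_eq]
  obtain ⟨g, hg⟩ := hext A B hAfin hBfin e hbij hdist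
  refine ⟨fun l => g (φ l), g.isometry.comp hφ, ?_⟩
  intro k
  have hmem : φk k ∈ A := Set.mem_range_self k
  have := hg ⟨φk k, hmem⟩
  have hk : eqA.symm ⟨φk k, hmem⟩ = k := by
    apply hφk_inj
    simp [eqA]
  simpa [e, eqA, eqB] using this
end

section
/- Given nonempty metric spaces M₁, M₂ and a nonempty metric space A with isometric embeddings f₁ : A → M₁ and f₂ : A → M₂, there exists a metric space M with isometric embeddings h₁ : M₁ → M and h₂ : M₂ → M such that h₁ ∘ f₁ = h₂ ∘ f₂, M = h₁(M₁) ∪ h₂(M₂), and for all x ∈ M₁ \ f₁(A), y ∈ M₂ \ f₂(A), d(h₁(x), h₂(y)) = inf { d₁(x, f₁(z)) + d₂(f₂(z), y) : z ∈ A }. -/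
open Metric

theorem stmt6 (M₁ M₂ A : Type) [MetricSpace M₁] [MetricSpace M₂] [MetricSpace A]
    [Nonempty M₁] [Nonempty M₂] [Nonempty A]
    (f₁ : A → M₁) (f₂ : A → M₂) (hf₁ : Isometry f₁) (hf₂ : Isometry f₂) :
    ∃ (M : Type) (_ : MetricSpace M) (h₁ : M₁ → M) (h₂ : M₂ → M),
      Isometry h₁ ∧ Isometry h₂ ∧
      (∀ a : A, h₁ (f₁ a) = h₂ (f₂ a)) ∧
      (Set.range h₁ ∪ Set.range h₂ = Set.univ) ∧
      (∀ x : M₁, x ∉ Set.range f₁ → ∀ y : M₂, y ∉ Set.range f₂ →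
        dist (h₁ x) (h₂ y) = ⨅ z : A, (dist x (f₁ z) + dist (f₂ z) y)) := by
  refine ⟨GlueSpace hf₁ hf₂, inferInstance, toGlueL hf₁ hf₂, toGlueR hf₁ hf₂,
    toGlueL_isometry hf₁ hf₂, toGlueR_isometry hf₁ hf₂,
    fun a => congrFun (toGlue_commute hf₁ hf₂) a, ?_, ?_⟩
  · ext p
    simp only [Set.mem_union, Set.mem_range, Set.mem_univ, iff_true]
    obtain ⟨q, rfl⟩ := Quotient.mk''_surjective (α := M₁ ⊕ M₂) p
    cases q with
    | inl x => exact Or.inl ⟨x, rfl⟩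
    | inr y => exact Or.inr ⟨y, rfl⟩
  · intro x _ y _
    have h : dist (toGlueL hf₁ hf₂ x) (toGlueR hf₁ hf₂ y)
        = glueDist f₁ f₂ 0 (.inl x) (.inr y) := rfl
    rw [h]
    show (⨅ p, dist x (f₁ p) + dist y (f₂ p)) + 0 = _
    rw [add_zero]
    exact iInf_congr fun z => by rw [dist_comm y]
end

section
/- Let M be a complete, separable, compactly injective metric space. Then every nonempty finite intersection of open balls V = ⋂_{i=1}^k O(aᵢ, rᵢ) in M is homotopically trivial: every continuous map from the n-sphere Sⁿ into V extends to a continuous map from the (n+1)-ball Bⁿ⁺¹ into V. -/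
open Metric Set

/-- A metric space `M` is compactly injective if every distance-preserving map
from a compact subspace of a compact metric space into `M` extends to a
distance-preserving map of the whole compact space. -/
def CompactlyInjective (M : Type*) [MetricSpace M] : Prop :=
  ∀ (L : Type) (_ : MetricSpace L) (_ : CompactSpace L) (K : Set L), IsCompact K →
    ∀ f : K → M, Isometry f → ∃ g : L → M, Isometry g ∧ ∀ x : K, g x = f x

/-!
Embed `M` isometrically into `ℓ^∞` (Kuratowski). Fix `p ∈ V`; the cone in `ℓ^∞` with apex the
image of `p` over the images of `f(Sⁿ)` and of the centres `aᵢ` is compact, so compact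
injectivity gives an isometry from this cone back to `M` fixing `f(Sⁿ)` and every `aᵢ`. Coning
off `f` radially inside `ℓ^∞` fills the sphere within the subcone over `f(Sⁿ)`, which lies in
every ball `O(aᵢ, rᵢ)` of `ℓ^∞` because balls of a normed space are convex. Pulling the filling
back by the isometry keeps each distance to `aᵢ` below `rᵢ`.
-/

theorem IsCompact.convexJoin {W : Type*} [AddCommGroup W] [Module ℝ W] [TopologicalSpace W]
    [IsTopologicalAddGroup W] [ContinuousSMul ℝ W] {s t : Set W} (hs : IsCompact s)
    (ht : IsCompact t) : IsCompact (_root_.convexJoin ℝ s t) := by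
  have h : _root_.convexJoin ℝ s t =
      (fun x : W × W × ℝ ↦ AffineMap.lineMap x.1 x.2.1 x.2.2) '' (s ×ˢ t ×ˢ Icc 0 1) := by
    ext x
    simp only [mem_convexJoin, segment_eq_image_lineMap, mem_image, mem_prod, Prod.exists]
    aesop
  rw [h]
  exact (hs.prod (ht.prod isCompact_Icc)).image AffineMap.lineMap_continuous_uncurry

theorem CompactlyInjective.exists_isometry_leftInvOn {M : Type*} [MetricSpace M]
    (hM : CompactlyInjective M) {W : Type} [MetricSpace W] {Φ : M → W} (hΦ : Isometry Φ)
    {S : Set M} (hS : IsCompact S) {T : Set W} (hT : IsCompact T) (hST : Φ '' S ⊆ T) :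
    ∃ g : T → M, Isometry g ∧ ∀ z (hz : z ∈ S), g ⟨Φ z, hST (mem_image_of_mem Φ hz)⟩ = z := by
  have : CompactSpace T := isCompact_iff_compactSpace.mp hT
  let K : Set T := Subtype.val ⁻¹' (Φ '' S)
  have hK : IsCompact K :=
    ((hS.image hΦ.continuous).isClosed.preimage continuous_subtype_val).isCompact
  let κ : K → M := fun x ↦ x.2.choose
  have hΦκ : ∀ x, Φ (κ x) = x := fun x ↦ x.2.choose_spec.2
  have hκ : Isometry κ := Isometry.of_dist_eq fun x y ↦ by
    rw [← hΦ.dist_eq, hΦκ, hΦκ]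
    rfl
  obtain ⟨g, hg, hgκ⟩ := hM T inferInstance inferInstance K hK κ hκ
  refine ⟨g, hg, fun z hz ↦ ?_⟩
  rw [hgκ ⟨_, z, hz, rfl⟩]
  exact hΦ.injective (hΦκ _)

section radial

variable {E W : Type*} [NormedAddCommGroup E] [NormedSpace ℝ E] [Nontrivial E]
  [NormedAddCommGroup W] [NormedSpace ℝ W]

-- The value at `0` is arbitrary: `radialExtension` weights it by `‖0‖ = 0`.
open scoped Classical in
noncomputable def radialProjection (x : E) : sphere (0 : E) 1 :=
  if hx : x = 0 then ⟨_, (NormedSpace.sphere_nonempty.2 zero_le_one).some_mem⟩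
  else (homeomorphUnitSphereProd E ⟨x, hx⟩).1

theorem radialProjection_of_mem_sphere (x : sphere (0 : E) 1) : radialProjection (x : E) = x := by
  ext
  simp [radialProjection, ne_zero_of_mem_unit_sphere x]

theorem continuousAt_radialProjection {x : E} (hx : x ≠ 0) :
    ContinuousAt radialProjection x := by
  have h : ContinuousOn (radialProjection (E := E)) {0}ᶜ := by
    rw [continuousOn_iff_continuous_domRestrict]
    convert continuous_fst.comp (homeomorphUnitSphereProd E).continuous using 1
    exact funext fun y ↦ dif_neg y.2
  exact h.continuousAt (isOpen_compl_singleton.mem_nhds hx)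

noncomputable def radialExtension (q : W) (u : sphere (0 : E) 1 → W) (x : E) : W :=
  AffineMap.lineMap q (u (radialProjection x)) ‖x‖

theorem radialExtension_of_mem_sphere (q : W) (u : sphere (0 : E) 1 → W)
    (x : sphere (0 : E) 1) : radialExtension q u x = u x := by
  rw [radialExtension, radialProjection_of_mem_sphere, mem_sphere_zero_iff_norm.1 x.2,
    AffineMap.lineMap_apply_one]

theorem radialExtension_mem_segment (q : W) (u : sphere (0 : E) 1 → W) {x : E}
    (hx : x ∈ closedBall 0 1) :
    radialExtension q u x ∈ segment ℝ q (u (radialProjection x)) := by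
  rw [segment_eq_image_lineMap]
  exact ⟨‖x‖, ⟨norm_nonneg x, mem_closedBall_zero_iff.1 hx⟩, rfl⟩

theorem continuous_radialExtension (q : W) {u : sphere (0 : E) 1 → W} (hu : Continuous u)
    (hb : Bornology.IsBounded (range u)) : Continuous (radialExtension q u) := by
  rw [continuous_iff_continuousAt]
  intro x
  rcases eq_or_ne x 0 with rfl | hx
  · have hb' : Filter.IsBoundedUnder (· ≤ ·) (nhds (0 : E))
        fun y ↦ ‖u (radialProjection y) - q‖ := by
      obtain ⟨C, hC⟩ := hb.exists_norm_le
      exact Filter.isBoundedUnder_of ⟨C + ‖q‖, fun y ↦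
        (norm_sub_le _ _).trans (add_le_add_left (hC _ ⟨_, rfl⟩) _)⟩
    have h := (continuous_norm.tendsto' (0 : E) 0 norm_zero).zero_smul_isBoundedUnder_le hb'
    have hq : radialExtension q u = fun y ↦ ‖y‖ • (u (radialProjection y) - q) + q :=
      funext fun y ↦ AffineMap.lineMap_apply_module' _ _ _
    rw [ContinuousAt, hq]
    simpa using h.add_const q
  · exact continuousAt_const.lineMap (hu.continuousAt.comp (continuousAt_radialProjection hx))
      continuous_norm.continuousAt

end radial

theorem stmt10_general (M : Type*) [MetricSpace M]
    [TopologicalSpace.SeparableSpace M] (hM : CompactlyInjective M)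
    (ι : Type) [Finite ι] (a : ι → M) (r : ι → ℝ)
    (V : Set M) (hV : V = ⋂ i, Metric.ball (a i) (r i)) (hne : V.Nonempty)
    (n : ℕ)
    (f : (Metric.sphere (0 : EuclideanSpace ℝ (Fin (n + 1))) 1) → M)
    (hf : Continuous f) (hfV : Set.range f ⊆ V) :
    ∃ g : (Metric.closedBall (0 : EuclideanSpace ℝ (Fin (n + 1))) 1) → M,
      Continuous g ∧ Set.range g ⊆ V ∧
      ∀ x, g (Set.inclusion Metric.sphere_subset_closedBall x) = f x := by
  obtain ⟨p, hp⟩ := hne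
  let Φ := kuratowskiEmbedding M
  have hΦ : Isometry Φ := kuratowskiEmbedding.isometry M
  let S := range f ∪ range a
  have hS : IsCompact S := (isCompact_range hf).union (finite_range a).isCompact
  let T := convexJoin ℝ {Φ p} (Φ '' S)
  obtain ⟨g, hg, hgΦ⟩ := hM.exists_isometry_leftInvOn hΦ hS
    (isCompact_singleton.convexJoin (hS.image hΦ.continuous))
    (subset_convexJoin_right (singleton_nonempty _))
  let ψ := radialExtension (Φ p) (Φ ∘ f)
  have hψ : ∀ x ∈ closedBall 0 1, ψ x ∈ segment ℝ (Φ p) (Φ (f (radialProjection x))) :=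
    fun _ ↦ radialExtension_mem_segment (Φ p) (Φ ∘ f)
  have hψT : ∀ x ∈ closedBall 0 1, ψ x ∈ T := fun x hx ↦
    segment_subset_convexJoin (mem_singleton _) (mem_image_of_mem Φ (Or.inl ⟨_, rfl⟩)) (hψ x hx)
  refine ⟨fun x ↦ g ⟨ψ x, hψT x x.2⟩, ?_, ?_, fun x ↦ ?_⟩
  · have hΦf := hΦ.continuous.comp hf
    have hψc : Continuous ψ := continuous_radialExtension _ hΦf (isCompact_range hΦf).isBounded
    exact hg.continuous.comp ((hψc.comp continuous_subtype_val).subtype_mk _)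
  · rintro _ ⟨x, rfl⟩
    rw [hV, mem_iInter]
    intro i
    have hball : ∀ z ∈ V, Φ z ∈ ball (Φ (a i)) (r i) := fun z hz ↦ by
      rw [hV, mem_iInter] at hz
      rw [mem_ball, hΦ.dist_eq]
      exact hz i
    rw [mem_ball, ← hgΦ (a i) (Or.inr ⟨i, rfl⟩), hg.dist_eq, Subtype.dist_eq]
    exact (convex_ball _ _).segment_subset (hball p hp) (hball _ (hfV ⟨_, rfl⟩)) (hψ x x.2)
  · rw [← hgΦ (f x) (Or.inl ⟨x, rfl⟩)]
    exact congrArg g (Subtype.ext (radialExtension_of_mem_sphere (Φ p) (Φ ∘ f) x))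

theorem stmt10 (M : Type*) [MetricSpace M] [CompleteSpace M]
    [TopologicalSpace.SeparableSpace M] (hM : CompactlyInjective M)
    (ι : Type) [Finite ι] (a : ι → M) (r : ι → ℝ)
    (V : Set M) (hV : V = ⋂ i, Metric.ball (a i) (r i)) (hne : V.Nonempty)
    (n : ℕ)
    (f : (Metric.sphere (0 : EuclideanSpace ℝ (Fin (n + 1))) 1) → M)
    (hf : Continuous f) (hfV : Set.range f ⊆ V) :
    ∃ g : (Metric.closedBall (0 : EuclideanSpace ℝ (Fin (n + 1))) 1) → M,
      Continuous g ∧ Set.range g ⊆ V ∧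
      ∀ x, g (Set.inclusion Metric.sphere_subset_closedBall x) = f x :=
  stmt10_general M hM ι a r V hV hne n f hf hfV
end

section
/- Every complete, separable, compactly injective metric space M is homotopically trivial: for every n ≥ 0, every continuous map f : Sⁿ → M extends to a continuous map Bⁿ⁺¹ → M. -/
open Metric Set Topology Pointwise

section RadialExtension

variable {E F : Type*} [NormedAddCommGroup E] [NormedSpace ℝ E]
  [NormedAddCommGroup F] [NormedSpace ℝ F]

open Classical in
noncomputable def radialProj (y₀ : sphere (0 : E) 1) (x : E) : sphere (0 : E) 1 :=
  if hx : x = 0 then y₀ else ⟨‖x‖⁻¹ • x, by simp [norm_smul, hx]⟩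

theorem radialProj_of_mem_sphere (y₀ : sphere (0 : E) 1) (x : sphere (0 : E) 1) :
    radialProj y₀ (x : E) = x := by
  have hx : ‖(x : E)‖ = 1 := mem_sphere_zero_iff_norm.mp x.2
  rw [radialProj, dif_neg (ne_zero_of_mem_unit_sphere x)]
  ext1
  simp [hx]

theorem continuousAt_radialProj (y₀ : sphere (0 : E) 1) {x : E} (hx : x ≠ 0) :
    ContinuousAt (radialProj y₀) x := by
  rw [IsInducing.subtypeVal.continuousAt_iff]
  have hEq : (fun w : E => ‖w‖⁻¹ • w) =ᶠ[𝓝 x] fun w => (radialProj y₀ w : E) := by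
    filter_upwards [isOpen_compl_singleton.mem_nhds hx] with w hw
    rw [radialProj, dif_neg (show w ≠ 0 from hw)]
  exact ((continuous_norm.continuousAt.inv₀ (norm_ne_zero_iff.mpr hx)).smul
    continuousAt_id).congr hEq

theorem continuous_norm_smul_comp_radialProj (y₀ : sphere (0 : E) 1)
    {φ : sphere (0 : E) 1 → F} (hφ : Continuous φ) (hφb : Bornology.IsBounded (range φ)) :
    Continuous fun x : E => ‖x‖ • φ (radialProj y₀ x) := by
  rw [continuous_iff_continuousAt]
  intro x
  rcases eq_or_ne x 0 with rfl | hx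
  · obtain ⟨C, hC⟩ := isBounded_iff_forall_norm_le.mp hφb
    have hbound : ∀ w : E, ‖‖w‖ • φ (radialProj y₀ w)‖ ≤ C * ‖w‖ := fun w => by
      rw [norm_smul, norm_norm, mul_comm]
      exact mul_le_mul_of_nonneg_right (hC _ (mem_range_self _)) (norm_nonneg w)
    have hlim : Filter.Tendsto (fun w : E => C * ‖w‖) (𝓝 0) (𝓝 0) :=
      (continuous_const.mul continuous_norm).tendsto' 0 0 (by simp)
    simpa [ContinuousAt] using squeeze_zero_norm hbound hlim
  · exact continuous_norm.continuousAt.smul (hφ.continuousAt.comp (continuousAt_radialProj y₀ hx))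

theorem exists_continuous_extension_closedBall_mem_Icc_smul [Nontrivial E]
    {φ : sphere (0 : E) 1 → F} (hφ : Continuous φ) (hφb : Bornology.IsBounded (range φ)) :
    ∃ ψ : closedBall (0 : E) 1 → F, Continuous ψ ∧
      (∀ x, ψ (inclusion sphere_subset_closedBall x) = φ x) ∧
      ∀ x, ψ x ∈ Icc (0 : ℝ) 1 • range φ := by
  obtain ⟨y₀⟩ : Nonempty (sphere (0 : E) 1) :=
    (NormedSpace.sphere_nonempty.mpr zero_le_one).to_subtype
  refine ⟨fun x => ‖(x : E)‖ • φ (radialProj y₀ x),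
    (continuous_norm_smul_comp_radialProj y₀ hφ hφb).comp continuous_subtype_val,
    fun x => ?_, fun x => smul_mem_smul ⟨norm_nonneg _, mem_closedBall_zero_iff.mp x.2⟩
      (mem_range_self _)⟩
  simp [radialProj_of_mem_sphere, mem_sphere_zero_iff_norm.mp x.2]

end RadialExtension

theorem CompactlyInjective.exists_isometry_extension {M : Type*} [MetricSpace M]
    (hM : CompactlyInjective M) {Y : Type} [MetricSpace Y] {K L : Set Y}
    (hK : IsCompact K) (hL : IsCompact L) (hKL : K ⊆ L) {φ : K → M} (hφ : Isometry φ) :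
    ∃ g : L → M, Isometry g ∧ ∀ x : K, g (inclusion hKL x) = φ x := by
  have : CompactSpace L := isCompact_iff_compactSpace.mp hL
  obtain ⟨g, hg, hgφ⟩ := hM L inferInstance inferInstance (Subtype.val ⁻¹' K)
    (hK.isClosed.preimage continuous_subtype_val).isCompact
    (fun x => φ ⟨x.1, x.2⟩) (Isometry.of_dist_eq fun x y => hφ.dist_eq ⟨x.1, x.2⟩ ⟨y.1, y.2⟩)
  exact ⟨g, hg, fun x => hgφ ⟨inclusion hKL x, x.2⟩⟩

theorem CompactlyInjective.exists_continuous_extension_closedBall {M : Type*} [MetricSpace M]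
    (hM : CompactlyInjective M) {E : Type*} [NormedAddCommGroup E] [NormedSpace ℝ E]
    [FiniteDimensional ℝ E] [Nontrivial E] {f : sphere (0 : E) 1 → M} (hf : Continuous f) :
    ∃ g : closedBall (0 : E) 1 → M, Continuous g ∧
      ∀ x, g (inclusion sphere_subset_closedBall x) = f x := by
  -- `range f` is compact, hence separable, which is what the Kuratowski embedding needs.
  have : CompactSpace (range f) := isCompact_iff_compactSpace.mp (isCompact_range hf)
  set κ := kuratowskiEmbedding (range f)
  have hκ : Isometry κ := kuratowskiEmbedding.isometry _
  set φ := κ ∘ rangeFactorization f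
  have hφ : Continuous φ := hκ.continuous.comp hf.rangeFactorization
  have hφrange : range φ = range κ := rangeFactorization_surjective.range_comp κ
  have hK : IsCompact (range κ) := isCompact_range hκ.continuous
  obtain ⟨ψ, hψ, hψf, hψcone⟩ := exists_continuous_extension_closedBall_mem_Icc_smul hφ
    (hφrange ▸ hK.isBounded)
  rw [hφrange] at hψcone
  have hKL : range κ ⊆ Icc (0 : ℝ) 1 • range κ := fun y hy =>
    ⟨1, ⟨zero_le_one, le_rfl⟩, y, hy, one_smul ℝ y⟩
  obtain ⟨g, hg, hgκ⟩ := hM.exists_isometry_extension hK (isCompact_Icc.smul_set hK) hKL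
    (φ := Subtype.val ∘ hκ.isometryEquivOnRange.symm)
    (isometry_subtype_coe.comp hκ.isometryEquivOnRange.symm.isometry)
  refine ⟨fun x => g ⟨ψ x, hψcone x⟩, hg.continuous.comp (hψ.subtype_mk _), fun x => ?_⟩
  set y := rangeFactorization f x
  have hinv : hκ.isometryEquivOnRange.symm ⟨κ y, mem_range_self y⟩ = y :=
    hκ.isometryEquivOnRange.symm_apply_apply y
  calc g ⟨ψ (inclusion sphere_subset_closedBall x), _⟩
      = g (inclusion hKL ⟨κ y, mem_range_self y⟩) := congrArg g (Subtype.ext (hψf x))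
    _ = (hκ.isometryEquivOnRange.symm ⟨κ y, mem_range_self y⟩ : M) := hgκ _
    _ = f x := by rw [hinv]; rfl

theorem stmt11_general (M : Type*) [MetricSpace M] (hM : CompactlyInjective M)
    (n : ℕ)
    (f : (Metric.sphere (0 : EuclideanSpace ℝ (Fin (n + 1))) 1) → M)
    (hf : Continuous f) :
    ∃ g : (Metric.closedBall (0 : EuclideanSpace ℝ (Fin (n + 1))) 1) → M,
      Continuous g ∧
      ∀ x, g (Set.inclusion Metric.sphere_subset_closedBall x) = f x :=
  hM.exists_continuous_extension_closedBall hf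

theorem stmt11 (M : Type*) [MetricSpace M] [CompleteSpace M]
    [TopologicalSpace.SeparableSpace M] (hM : CompactlyInjective M)
    (n : ℕ)
    (f : (Metric.sphere (0 : EuclideanSpace ℝ (Fin (n + 1))) 1) → M)
    (hf : Continuous f) :
    ∃ g : (Metric.closedBall (0 : EuclideanSpace ℝ (Fin (n + 1))) 1) → M,
      Continuous g ∧
      ∀ x, g (Set.inclusion Metric.sphere_subset_closedBall x) = f x :=
  stmt11_general M hM n f hf
end

section
/- Every complete, separable, compactly injective metric space M is path-connected. -/
theorem stmt12 (M : Type*) [MetricSpace M] [CompleteSpace M]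
    [TopologicalSpace.SeparableSpace M] (hM : CompactlyInjective M) :
    PathConnectedSpace M := by
  have hne : Nonempty M := by
    obtain ⟨g, -, -⟩ := hM PUnit inferInstance inferInstance ∅ isCompact_empty
      (fun x => x.2.elim) (fun x => x.2.elim)
    exact ⟨g PUnit.unit⟩
  refine ⟨hne, fun a b => ?_⟩
  rcases eq_or_ne a b with rfl | hab
  · exact Joined.refl a
  set d := dist a b with hdd
  have hdpos : 0 < d := dist_pos.mpr hab
  set L := Set.Icc (0:ℝ) d with hL
  haveI : CompactSpace L := isCompact_iff_compactSpace.mp isCompact_Icc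
  have h0 : (0:ℝ) ∈ L := Set.left_mem_Icc.mpr hdpos.le
  have hdm : d ∈ L := Set.right_mem_Icc.mpr hdpos.le
  set p0 : L := ⟨0, h0⟩ with hp0
  set pd : L := ⟨d, hdm⟩ with hpd
  set K : Set L := {p0, pd} with hKdef
  have hK : IsCompact K := (Set.toFinite K).isCompact
  set f : K → M := fun x => if (x : L) = p0 then a else b with hf
  have hne0d : p0 ≠ pd := fun h => hdpos.ne (congrArg Subtype.val h)
  have hdist0d : dist p0 pd = d := by
    simp [Subtype.dist_eq, hp0, hpd, Real.dist_eq, abs_of_nonneg hdpos.le]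
  have hdist0d' : dist pd p0 = d := by rw [dist_comm]; exact hdist0d
  have hfi : Isometry f := Isometry.of_dist_eq (by
    intro x y
    have hx := x.2; have hy := y.2
    simp only [hKdef, Set.mem_insert_iff, Set.mem_singleton_iff] at hx hy
    have hxy : dist x y = dist (x : L) (y : L) := Subtype.dist_eq x y
    rcases hx with hx | hx <;> rcases hy with hy | hy <;>
      simp [hf, hx, hy, hne0d, hne0d.symm, hxy, hdist0d, hdist0d', dist_comm a b, hdd])
  obtain ⟨g, hg, hgK⟩ := hM L inferInstance inferInstance K hK f hfi
  have hga : g p0 = a := by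
    have := hgK ⟨p0, Or.inl rfl⟩
    simpa [hf] using this
  have hgb : g pd = b := by
    have := hgK ⟨pd, Or.inr rfl⟩
    simpa [hf, hne0d.symm] using this
  have hpc : IsPathConnected (Set.Icc (0:ℝ) d) :=
    (convex_Icc (0:ℝ) d).isPathConnected ⟨0, h0⟩
  have hjoin : Joined p0 pd := (hpc.joinedIn 0 h0 d hdm).joined_subtype
  have : Joined (g p0) (g pd) := ⟨hjoin.somePath.map hg.continuous⟩
  rwa [hga, hgb] at this
end

section
/- Let M be a complete, separable, compactly injective metric space, let (Kₙ) be a sequence of nonempty compact subsets of M, and let h : M → ℝ be continuous with h > 0. Then there exist compact subsets Lₙ ⊆ M and continuous maps fₙ : Kₙ → Lₙ with fₙ(Kₙ) = Lₙ such that d(x, fₙ(x)) = h(x) for all x ∈ Kₙ, and moreover d(fₙ(x), y) ≥ h(x) for all x ∈ Kₙ and all y ∈ ⋃_{i<n} Lᵢ. -/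
/-!
Given compact sets `A` and `C` in `M`, glue to `C` a copy of `A` lifted to height `h`: inside
`M × ℝ` (with the max metric) take the compact set `Z = (A ∪ C) × {0} ∪ {(x, h x) | x ∈ A}`.
Compact injectivity extends the isometry `(y, 0) ↦ y` to an isometry `g : Z → M`, and
`x ↦ g (x, h x)` lies at distance exactly `h x` from `x` and at least `h x` from all of `C`.
The sequence is then built greedily, taking for `C` the union of the images built so far.
-/

open Set

namespace CompactlyInjective

variable {M : Type*} [MetricSpace M]

/-- `CompactlyInjective` quantifies only over spaces in `Type`; the Kuratowski embedding into
`ℓ^∞(ℕ, ℝ)` transfers the extension property to compact spaces in any universe. -/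
theorem exists_isometry_extend (hM : CompactlyInjective M) {Z : Type*} [MetricSpace Z]
    [CompactSpace Z] {K : Set Z} (hK : IsCompact K) {f : K → M} (hf : Isometry f) :
    ∃ g : Z → M, Isometry g ∧ ∀ x : K, g x = f x := by
  have hemb := kuratowskiEmbedding.isometry Z
  let e := hemb.isometryEquivOnRange
  have : CompactSpace (range (kuratowskiEmbedding Z)) :=
    isCompact_iff_compactSpace.mp (isCompact_range hemb.continuous)
  let f' : e.symm ⁻¹' K → M := fun k => f ⟨e.symm k, k.2⟩
  have hf' : Isometry f' := Isometry.of_dist_eq fun a b => by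
    simp only [f', hf.dist_eq, Subtype.dist_eq, e.symm.dist_eq]
  obtain ⟨g', hg', hg'f'⟩ :=
    hM _ inferInstance inferInstance _ (e.symm.toHomeomorph.isCompact_preimage.mpr hK) f' hf'
  refine ⟨g' ∘ e, hg'.comp e.isometry, fun x => ?_⟩
  have hx : e x.1 ∈ e.symm ⁻¹' K := by simp
  simpa [f'] using hg'f' ⟨e x, hx⟩

theorem exists_continuous_dist_eq (hM : CompactlyInjective M) {h : M → ℝ} (hc : Continuous h)
    (h0 : ∀ x, 0 ≤ h x) {A C : Set M} (hA : IsCompact A) (hC : IsCompact C) :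
    ∃ f : A → M, Continuous f ∧ (∀ x : A, dist (x : M) (f x) = h x) ∧
      ∀ x : A, ∀ c ∈ C, h x ≤ dist (f x) c := by
  let Z : Set (M × ℝ) := (A ∪ C) ×ˢ {0} ∪ (fun x => (x, h x)) '' A
  have : CompactSpace Z := isCompact_iff_compactSpace.mp <|
    ((hA.union hC).prod isCompact_singleton).union
      (hA.image (continuous_id.prodMk hc))
  let base : Set Z := {z | (z : M × ℝ).2 = 0}
  have hbase : IsCompact base :=
    (isClosed_eq (continuous_snd.comp continuous_subtype_val) continuous_const).isCompact
  have hproj : Isometry fun z : base => ((z : Z) : M × ℝ).1 := Isometry.of_dist_eq fun a b => by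
    simp [Subtype.dist_eq, Prod.dist_eq, a.2.out, b.2.out]
  obtain ⟨g, hg, hg_base⟩ := hM.exists_isometry_extend hbase hproj
  let lift (x : A) : Z := ⟨(x, h x), Or.inr ⟨x, x.2, rfl⟩⟩
  have hg_zero (y : M) (hy : y ∈ A ∪ C) : g ⟨(y, 0), Or.inl ⟨hy, rfl⟩⟩ = y :=
    hg_base ⟨_, rfl⟩
  have hdist (x : A) (y : M) (hy : y ∈ A ∪ C) :
      dist (g (lift x)) y = max (dist (x : M) y) (h x) := by
    conv_lhs => rw [← hg_zero y hy, hg.dist_eq]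
    rw [Subtype.dist_eq, Prod.dist_eq, Real.dist_eq, sub_zero, abs_of_nonneg (h0 x)]
  refine ⟨g ∘ lift, hg.continuous.comp (by fun_prop), fun x => ?_, fun x c hc => ?_⟩
  · rw [dist_comm, Function.comp_apply, hdist x x (Or.inl x.2), dist_self, max_eq_right (h0 x)]
  · rw [Function.comp_apply, hdist x c (Or.inr hc)]
    exact le_max_right _ _

end CompactlyInjective

theorem exists_seq_of_forall_isCompact_exists {X : Type*} [TopologicalSpace X]
    {ι : ℕ → Type*} (P : (n : ℕ) → Set X → (ι n → X) → Prop)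
    (step : ∀ n C, IsCompact C → ∃ f : ι n → X, IsCompact (range f) ∧ P n C f) :
    ∃ f : (n : ℕ) → ι n → X, ∀ n, IsCompact (range (f n)) ∧ P n (⋃ i < n, range (f i)) (f n) := by
  choose F hF using step
  let acc : ℕ → {C : Set X // IsCompact C} := fun n => Nat.rec ⟨∅, isCompact_empty⟩
    (fun n C => ⟨C.1 ∪ range (F n C.1 C.2), C.2.union (hF n C.1 C.2).1⟩) n
  have hacc (n : ℕ) : (acc n).1 = ⋃ i < n, range (F i (acc i).1 (acc i).2) := by
    induction n with
    | zero => simp [acc]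
    | succ n ih => rw [biUnion_lt_succ, ← ih]
  exact ⟨fun n => F n (acc n).1 (acc n).2, fun n => hacc n ▸ hF n _ _⟩

theorem stmt14_general (M : Type*) [MetricSpace M] (hM : CompactlyInjective M)
    (K : ℕ → Set M) (hKc : ∀ n, IsCompact (K n))
    (h : M → ℝ) (hc : Continuous h) (hpos : ∀ x, 0 < h x) :
    ∃ (L : ℕ → Set M) (f : (n : ℕ) → K n → M),
      (∀ n, IsCompact (L n)) ∧
      (∀ n, Continuous (f n)) ∧
      (∀ n, Set.range (f n) = L n) ∧
      (∀ n (x : K n), dist (x : M) (f n x) = h x) ∧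
      (∀ n (x : K n), ∀ y ∈ ⋃ i < n, L i, h (x : M) ≤ dist (f n x) y) := by
  obtain ⟨f, hf⟩ := exists_seq_of_forall_isCompact_exists (ι := fun n => K n)
    (fun n C (f : K n → M) => Continuous f ∧ (∀ x : K n, dist (x : M) (f x) = h x) ∧
      ∀ x : K n, ∀ y ∈ C, h x ≤ dist (f x) y)
    fun n C hC => by
      have : CompactSpace (K n) := isCompact_iff_compactSpace.mp (hKc n)
      obtain ⟨f, hf⟩ := hM.exists_continuous_dist_eq hc (fun x => (hpos x).le) (hKc n) hC
      exact ⟨f, isCompact_range hf.1, hf⟩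
  exact ⟨fun n => range (f n), f, fun n => (hf n).1, fun n => (hf n).2.1, fun _ => rfl,
    fun n => (hf n).2.2.1, fun n => (hf n).2.2.2⟩

theorem stmt14 (M : Type*) [MetricSpace M] [CompleteSpace M]
    [TopologicalSpace.SeparableSpace M] (hM : CompactlyInjective M)
    (K : ℕ → Set M) (hKc : ∀ n, IsCompact (K n)) (hKne : ∀ n, (K n).Nonempty)
    (h : M → ℝ) (hc : Continuous h) (hpos : ∀ x, 0 < h x) :
    ∃ (L : ℕ → Set M) (f : (n : ℕ) → K n → M),
      (∀ n, IsCompact (L n)) ∧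
      (∀ n, Continuous (f n)) ∧
      (∀ n, Set.range (f n) = L n) ∧
      (∀ n (x : K n), dist (x : M) (f n x) = h x) ∧
      (∀ n (x : K n), ∀ y ∈ ⋃ i < n, L i, h (x : M) ≤ dist (f n x) y) :=
  stmt14_general M hM K hKc h hc hpos
end

section
/- Let M be a metric space, (Lₙ) a sequence of compact subsets of M, (Kₙ) a sequence of compact subsets of M, fₙ : Kₙ → Lₙ surjective maps, and h : M → ℝ continuous with h > 0. Suppose d(x, fₙ(x)) = h(x) for all x ∈ Kₙ, and d(fₙ(x), y) ≥ h(x) for all x ∈ Kₙ and y ∈ ⋃_{i<n} Lᵢ. Then the family (Lₙ) is discrete: every point of M has a neighborhood meeting at most one Lₙ. -/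
theorem stmt15 (M : Type*) [MetricSpace M]
    (L K : ℕ → Set M) (hL : ∀ n, IsCompact (L n)) (hK : ∀ n, IsCompact (K n))
    (f : (n : ℕ) → K n → M) (hsurj : ∀ n, Set.range (f n) = L n)
    (h : M → ℝ) (hc : Continuous h) (hpos : ∀ x, 0 < h x)
    (hmove : ∀ n (x : K n), dist (x : M) (f n x) = h x)
    (hfar : ∀ n (x : K n), ∀ y ∈ ⋃ i < n, L i, h (x : M) ≤ dist (f n x) y) :
    ∀ p : M, ∃ U ∈ nhds p, {n | (U ∩ L n).Nonempty}.Subsingleton := by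
  intro p
  obtain ⟨r, hr, hrc⟩ := Metric.continuousAt_iff.mp (hc.continuousAt (x := p)) (h p / 2)
    (by linarith [hpos p])
  set δ := min r (h p) / 4 with hδdef
  have hδpos : 0 < δ := by
    have := hpos p
    have : 0 < min r (h p) := lt_min hr this
    positivity
  have hδr : δ ≤ r / 4 := by
    have : min r (h p) ≤ r := min_le_left _ _
    linarith
  have hδh : δ ≤ h p / 4 := by
    have : min r (h p) ≤ h p := min_le_right _ _
    linarith
  refine ⟨Metric.ball p δ, Metric.ball_mem_nhds p hδpos, ?_⟩
  -- key claim: if z ∈ ball p δ ∩ L n with m < n, and w ∈ ball p δ ∩ L m, contradiction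
  have key : ∀ m n : ℕ, m < n → (Metric.ball p δ ∩ L n).Nonempty →
      (Metric.ball p δ ∩ L m).Nonempty → False := by
    intro m n hmn ⟨z, hzU, hzL⟩ ⟨w, hwU, hwL⟩
    rw [← hsurj n] at hzL
    obtain ⟨x, hx⟩ := hzL
    have hdxz : dist (x : M) z = h x := by rw [← hx]; exact hmove n x
    -- lower bound on h x
    have hxlb : 2 * δ ≤ h (x : M) := by
      by_cases hcase : h (x : M) < r / 2
      · have hxp : dist (x : M) p < r := by
          calc dist (x : M) p ≤ dist (x : M) z + dist z p := dist_triangle _ _ _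
            _ < r / 2 + δ := by
                rw [hdxz]
                exact add_lt_add_of_le_of_lt (le_of_lt hcase) (Metric.mem_ball.mp hzU)
            _ ≤ r := by linarith
        have := hrc hxp
        have := abs_lt.mp this
        linarith
      · linarith
    have hwmem : w ∈ ⋃ i < n, L i := Set.mem_biUnion hmn hwL
    have hfar' := hfar n x w hwmem
    rw [hx] at hfar'
    have : dist z w < 2 * δ := by
      calc dist z w ≤ dist z p + dist p w := dist_triangle _ _ _
        _ < δ + δ := add_lt_add (Metric.mem_ball.mp hzU)
            (Metric.mem_ball'.mp hwU)
        _ = 2 * δ := by ring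
    linarith
  intro a ha b hb
  by_contra hab
  rcases lt_or_gt_of_ne hab with hlt | hlt
  · exact key a b hlt hb ha
  · exact key b a hlt ha hb
end

section
/- Every complete, separable, compactly injective metric space has the discrete approximation property: for every sequence (Kₙ) of compact subsets and every continuous h : M → (0,∞) there exist continuous maps fₙ : Kₙ → M with d(x, fₙ(x)) ≤ h(x) for all x ∈ Kₙ such that the family (fₙ(Kₙ)) is discrete in M. -/
inductive MyGlue (A B : Type u) : Type u
  | inl : A → MyGlue A B
  | inr : B → MyGlue A B

variable {M : Type u} [MetricSpace M]

noncomputable def gd (h : M → ℝ) (K0 Kn : Set M) :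
    MyGlue ↥K0 ↥Kn → MyGlue ↥K0 ↥Kn → ℝ
  | .inl a, .inl b => dist (a : M) (b : M)
  | .inl a, .inr y => dist (a : M) (y : M) + h (y : M) / 2
  | .inr x, .inl b => dist (x : M) (b : M) + h (x : M) / 2
  | .inr x, .inr y => dist (x : M) (y : M) + |h (x : M) / 2 - h (y : M) / 2|

noncomputable def glueMS (h : M → ℝ) (hpos : ∀ x, 0 < h x) (K0 Kn : Set M) :
    MetricSpace (MyGlue ↥K0 ↥Kn) where
  dist := gd h K0 Kn
  dist_self z := by cases z <;> simp [gd]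
  dist_comm z w := by
    cases z <;> cases w <;> simp [gd, dist_comm, abs_sub_comm]
  dist_triangle z w v := by
    have T : ∀ p q r : M, dist p r ≤ dist p q + dist q r := fun p q r => dist_triangle p q r
    cases z with
    | inl a =>
      cases w with
      | inl b =>
        cases v with
        | inl c => simpa [gd] using T a b c
        | inr u => simp only [gd]; linarith [T a b u]
      | inr y =>
        cases v with
        | inl c => simp only [gd]; linarith [T a y c, (hpos y).le]
        | inr u =>
          simp only [gd]
          rcases abs_cases (h (y : M) / 2 - h (u : M) / 2) with ⟨e, _⟩ | ⟨e, _⟩ <;>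
            linarith [T a y u, (hpos (y : M)).le]
    | inr x =>
      cases w with
      | inl b =>
        cases v with
        | inl c => simp only [gd]; linarith [T x b c]
        | inr u =>
          simp only [gd]
          rcases abs_cases (h (x : M) / 2 - h (u : M) / 2) with ⟨e, _⟩ | ⟨e, _⟩ <;>
            linarith [T x b u, (hpos (x : M)).le, (hpos (u : M)).le]
      | inr y =>
        cases v with
        | inl c =>
          simp only [gd]
          rcases abs_cases (h (x : M) / 2 - h (y : M) / 2) with ⟨e, _⟩ | ⟨e, _⟩ <;>
            linarith [T x y c]
        | inr u =>
          simp only [gd]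
          rcases abs_cases (h (x : M) / 2 - h (y : M) / 2) with ⟨e1, _⟩ | ⟨e1, _⟩ <;>
            rcases abs_cases (h (y : M) / 2 - h (u : M) / 2) with ⟨e2, _⟩ | ⟨e2, _⟩ <;>
            rcases abs_cases (h (x : M) / 2 - h (u : M) / 2) with ⟨e3, _⟩ | ⟨e3, _⟩ <;>
            linarith [T x y u]
  eq_of_dist_eq_zero := by
    intro z w hzw
    cases z with
    | inl a =>
      cases w with
      | inl b =>
        simp only [gd] at hzw
        exact congrArg _ (Subtype.ext (by rwa [← dist_eq_zero]))
      | inr y =>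
        simp only [gd] at hzw
        have hp : (0:ℝ) < dist (a : M) (y : M) + h (y : M) / 2 := by
          have := dist_nonneg (x := (a : M)) (y := (y : M)); have := hpos (y : M); linarith
        exact absurd hzw hp.ne'
    | inr x =>
      cases w with
      | inl b =>
        simp only [gd] at hzw
        have hp : (0:ℝ) < dist (x : M) (b : M) + h (x : M) / 2 := by
          have := dist_nonneg (x := (x : M)) (y := (b : M)); have := hpos (x : M); linarith
        exact absurd hzw hp.ne'
      | inr y =>
        simp only [gd] at hzw
        have h1 : dist (x : M) (y : M) = 0 := by
          have := abs_nonneg (h (x : M) / 2 - h (y : M) / 2)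
          have := dist_nonneg (x := (x : M)) (y := (y : M))
          linarith
        exact congrArg _ (Subtype.ext (by rwa [← dist_eq_zero]))

theorem exists_step (hM : CompactlyInjective M)
    (h : M → ℝ) (hc : Continuous h) (hpos : ∀ x, 0 < h x)
    (Kn C : Set M) (hKn : IsCompact Kn) (hC : IsCompact C) :
    ∃ f : Kn → M, Continuous f ∧ (∀ x : Kn, dist (x : M) (f x) = h (x : M) / 2) ∧
      ∀ (x : Kn), ∀ c ∈ C, h (x : M) / 2 ≤ dist (f x) c := by
  classical
  have hK0 : IsCompact (Kn ∪ C) := hKn.union hC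
  letI instG : MetricSpace (MyGlue ↥(Kn ∪ C) ↥Kn) := glueMS h hpos (Kn ∪ C) Kn
  haveI : CompactSpace ↥(Kn ∪ C) := isCompact_iff_compactSpace.mp hK0
  haveI : CompactSpace ↥Kn := isCompact_iff_compactSpace.mp hKn
  have dll : ∀ (a b : ↥(Kn ∪ C)),
      dist (MyGlue.inl a : MyGlue ↥(Kn ∪ C) ↥Kn) (MyGlue.inl b) = dist (a : M) (b : M) :=
    fun _ _ => rfl
  have dlr : ∀ (a : ↥(Kn ∪ C)) (y : ↥Kn),
      dist (MyGlue.inl a : MyGlue ↥(Kn ∪ C) ↥Kn) (MyGlue.inr y)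
        = dist (a : M) (y : M) + h (y : M) / 2 := fun _ _ => rfl
  have drl : ∀ (x : ↥Kn) (b : ↥(Kn ∪ C)),
      dist (MyGlue.inr x : MyGlue ↥(Kn ∪ C) ↥Kn) (MyGlue.inl b)
        = dist (x : M) (b : M) + h (x : M) / 2 := fun _ _ => rfl
  have iso1 : Isometry (MyGlue.inl : ↥(Kn ∪ C) → MyGlue ↥(Kn ∪ C) ↥Kn) :=
    Isometry.of_dist_eq fun a b => dll a b
  have cont2 : Continuous (MyGlue.inr : ↥Kn → MyGlue ↥(Kn ∪ C) ↥Kn) := by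
    rw [Metric.continuous_iff]
    intro b ε hε
    have hφ : Continuous (fun y : ↥Kn => dist (y : M) (b : M) + |h (y : M) / 2 - h (b : M) / 2|) := by
      apply Continuous.add
      · exact continuous_subtype_val.dist continuous_const
      · exact ((((hc.comp continuous_subtype_val).div_const 2).sub continuous_const).abs)
    have h0 : Filter.Tendsto (fun y : ↥Kn => dist (y : M) (b : M) + |h (y : M) / 2 - h (b : M) / 2|)
        (nhds b) (nhds 0) := hφ.tendsto' b 0 (by simp)
    have hev := (Metric.tendsto_nhds.mp h0) ε hε
    rw [Metric.eventually_nhds_iff] at hev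
    obtain ⟨δ, hδpos, hδ⟩ := hev
    refine ⟨δ, hδpos, fun y hy => ?_⟩
    have h1 := hδ hy
    have h2 : dist (MyGlue.inr y : MyGlue ↥(Kn ∪ C) ↥Kn) (MyGlue.inr b)
        = dist (y : M) (b : M) + |h (y : M) / 2 - h (b : M) / 2| := rfl
    rw [h2]
    calc dist (y : M) (b : M) + |h (y : M) / 2 - h (b : M) / 2|
        ≤ |dist (y : M) (b : M) + |h (y : M) / 2 - h (b : M) / 2| - 0| := by
          rw [sub_zero]; exact le_abs_self _
      _ < ε := by rwa [Real.dist_eq] at h1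
  haveI compG : CompactSpace (MyGlue ↥(Kn ∪ C) ↥Kn) := by
    refine ⟨?_⟩
    have hcover : (Set.univ : Set (MyGlue ↥(Kn ∪ C) ↥Kn))
        = Set.range MyGlue.inl ∪ Set.range MyGlue.inr := by
      ext z
      constructor
      · intro _
        cases z with
        | inl a => exact Or.inl ⟨a, rfl⟩
        | inr b => exact Or.inr ⟨b, rfl⟩
      · intro _; trivial
    rw [hcover]
    exact (isCompact_range iso1.continuous).union (isCompact_range cont2)
  -- Kuratowski embedding into a Type 0 space
  let e := kuratowskiEmbedding (MyGlue ↥(Kn ∪ C) ↥Kn)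
  have he : Isometry e := kuratowskiEmbedding.isometry _
  let L : Type := ↥(Set.range e)
  haveI : CompactSpace L := isCompact_iff_compactSpace.mp (isCompact_range he.continuous)
  let ψ : MyGlue ↥(Kn ∪ C) ↥Kn → L := fun z => ⟨e z, Set.mem_range_self z⟩
  have ψiso : Isometry ψ := Isometry.of_dist_eq fun z w => by
    rw [Subtype.dist_eq]; exact he.dist_eq z w
  let KL : Set L := Set.range (fun a : ↥(Kn ∪ C) => ψ (MyGlue.inl a))
  have hKLc : IsCompact KL := isCompact_range (ψiso.continuous.comp iso1.continuous)
  let F : ↥KL → M := fun z => ((z.2.choose : ↥(Kn ∪ C)) : M)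
  have hF : ∀ z : ↥KL, ψ (MyGlue.inl z.2.choose) = z.1 := fun z => z.2.choose_spec
  have hψinj : Function.Injective ψ := ψiso.injective
  have hFspec : ∀ (a : ↥(Kn ∪ C)) (hz : ψ (MyGlue.inl a) ∈ KL),
      F ⟨ψ (MyGlue.inl a), hz⟩ = (a : M) := by
    intro a hz
    have h1 := hF ⟨ψ (MyGlue.inl a), hz⟩
    have h2 := hψinj h1
    have h3 : (⟨ψ (MyGlue.inl a), hz⟩ : ↥KL).2.choose = a := MyGlue.inl.inj h2
    show ((⟨ψ (MyGlue.inl a), hz⟩ : ↥KL).2.choose : M) = (a : M)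
    exact congrArg Subtype.val h3
  have Fiso : Isometry F := by
    refine Isometry.of_dist_eq fun z w => ?_
    have hz := hF z
    have hw := hF w
    rw [Subtype.dist_eq, ← hz, ← hw, ψiso.dist_eq, dll]
  obtain ⟨g, giso, hg⟩ := hM L inferInstance inferInstance KL hKLc F Fiso
  have hgl : ∀ a : ↥(Kn ∪ C), g (ψ (MyGlue.inl a)) = (a : M) := by
    intro a
    have := hg ⟨ψ (MyGlue.inl a), Set.mem_range_self a⟩
    rw [this, hFspec]
  refine ⟨fun x => g (ψ (MyGlue.inr x)), ?_, ?_, ?_⟩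
  · exact giso.continuous.comp (ψiso.continuous.comp cont2)
  · intro x
    have hx0 : (x : M) ∈ Kn ∪ C := Or.inl x.2
    have h1 : dist (g (ψ (MyGlue.inl ⟨(x : M), hx0⟩))) (g (ψ (MyGlue.inr x)))
        = dist ((⟨(x : M), hx0⟩ : ↥(Kn ∪ C)) : M) (x : M) + h (x : M) / 2 := by
      rw [giso.dist_eq, ψiso.dist_eq, dlr]
    rw [hgl] at h1
    simpa using h1
  · intro x c hcC
    have hc0 : c ∈ Kn ∪ C := Or.inr hcC
    have h1 : dist (g (ψ (MyGlue.inr x))) (g (ψ (MyGlue.inl ⟨c, hc0⟩)))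
        = dist (x : M) ((⟨c, hc0⟩ : ↥(Kn ∪ C)) : M) + h (x : M) / 2 := by
      rw [giso.dist_eq, ψiso.dist_eq, drl]
    rw [hgl] at h1
    have h2 := dist_nonneg (x := (x : M)) (y := c)
    have h3 : dist (g (ψ (MyGlue.inr x))) c = dist (x : M) c + h (x : M) / 2 := h1
    linarith [h3.ge, h3.le]

theorem stmt16 (M : Type*) [MetricSpace M] [CompleteSpace M]
    [TopologicalSpace.SeparableSpace M] (hM : CompactlyInjective M)
    (K : ℕ → Set M) (hKc : ∀ n, IsCompact (K n))
    (h : M → ℝ) (hc : Continuous h) (hpos : ∀ x, 0 < h x) :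
    ∃ f : (n : ℕ) → K n → M,
      (∀ n, Continuous (f n)) ∧
      (∀ n (x : K n), dist (x : M) (f n x) ≤ h x) ∧
      (∀ p : M, ∃ U ∈ nhds p, {n | (U ∩ Set.range (f n)).Nonempty}.Subsingleton) := by
  classical
  choose step hstep1 hstep2 hstep3 using
    fun (n : ℕ) (C : Set M) (hC : IsCompact C) => exists_step hM h hc hpos (K n) C (hKc n) hC
  have hrange : ∀ n (f : K n → M), Continuous f → IsCompact (Set.range f) := fun n f hf => by
    haveI : CompactSpace (K n) := isCompact_iff_compactSpace.mp (hKc n)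
    exact isCompact_range hf
  let S : ℕ → {C : Set M // IsCompact C} := fun n => Nat.rec ⟨∅, isCompact_empty⟩
    (fun m p => ⟨p.1 ∪ Set.range (step m p.1 p.2), p.2.union (hrange m _ (hstep1 m p.1 p.2))⟩) n
  let F : ∀ n, K n → M := fun n => step n (S n).1 (S n).2
  have hSsucc : ∀ n, (S (n+1)).1 = (S n).1 ∪ Set.range (F n) := fun n => rfl
  have hSmono : ∀ m n, m ≤ n → (S m).1 ⊆ (S n).1 := by
    intro m n hmn
    induction n, hmn using Nat.le_induction with
    | base => exact subset_rfl
    | succ n hmn ih =>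
      refine ih.trans ?_
      rw [hSsucc]
      exact Set.subset_union_left
  have hsep : ∀ n m, m < n → ∀ (x : K n) (y : K m), h (x : M) / 2 ≤ dist (F n x) (F m y) := by
    intro n m hmn x y
    have hyC : F m y ∈ (S n).1 := by
      refine hSmono (m+1) n hmn ?_
      rw [hSsucc]
      exact Or.inr ⟨y, rfl⟩
    exact hstep3 n (S n).1 (S n).2 x _ hyC
  refine ⟨F, fun n => hstep1 n _ _, ?_, ?_⟩
  · intro n x
    rw [hstep2 n (S n).1 (S n).2 x]
    linarith [hpos (x : M)]
  · intro p
    obtain ⟨δ, hδpos, hδ⟩ := Metric.continuous_iff.mp hc p (h p / 2) (by linarith [hpos p])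
    set r := min (δ / 3) (h p / 16) with hrdef
    have hr1 : r ≤ δ / 3 := min_le_left _ _
    have hr2 : r ≤ h p / 16 := min_le_right _ _
    have hrpos : 0 < r := lt_min (by linarith) (by linarith [hpos p])
    refine ⟨Metric.ball p r, Metric.ball_mem_nhds p hrpos, ?_⟩
    have key2 : ∀ n m, m < n → (Metric.ball p r ∩ Set.range (F n)).Nonempty →
        (Metric.ball p r ∩ Set.range (F m)).Nonempty → False := by
      intro n m hmn hn hm
      obtain ⟨a, haB, x, hax⟩ := hn
      obtain ⟨b, hbB, y, hby⟩ := hm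
      have hap : dist a p < r := Metric.mem_ball.mp haB
      have hbp : dist b p < r := Metric.mem_ball.mp hbB
      have h1 : h (x : M) / 2 ≤ dist a b := by
        rw [← hax, ← hby]; exact hsep n m hmn x y
      have hab : dist a b < 2 * r := by
        calc dist a b ≤ dist a p + dist p b := dist_triangle a p b
          _ < r + r := by rw [dist_comm p b]; linarith
          _ = 2 * r := by ring
      have hxa : dist (x : M) a = h (x : M) / 2 := by
        rw [← hax]; exact hstep2 n (S n).1 (S n).2 x
      have hxp : dist (x : M) p < δ := by
        calc dist (x : M) p ≤ dist (x : M) a + dist a p := dist_triangle _ a p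
          _ < h (x : M) / 2 + r := by linarith [hxa.le]
          _ < 2 * r + r := by linarith
          _ ≤ δ := by linarith
      have h2 := hδ (x : M) hxp
      rw [Real.dist_eq] at h2
      have h3 : h p / 2 < h (x : M) := by
        rcases abs_cases (h (x : M) - h p) with ⟨e, _⟩ | ⟨e, _⟩ <;> linarith
      linarith [hpos p]
    intro n hn m hm
    by_contra hne
    rcases Nat.lt_or_ge n m with hlt | hge
    · exact key2 m n hlt hm hn
    · exact key2 n m (lt_of_le_of_ne hge fun e => hne e.symm) hn hm
end
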